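/- There exists a constant C' > 0 (depending only on h, d, and the bounds on f) such that for all x ∈ ℝ^d and all ε ∈ (0,1]: | ∫ h_ε(x,y)·( f(y) − f(x) − ∇f(x)·(y−x) − ½·⟨∇²f(x)(y−x), y−x⟩ ) dy | ≤ C'·ε^{3/2}; i.e. the second-order Taylor remainder integrated against the rescaled kernel is O(ε^{3/2}), uniformly in x. -/

import Mathlib

/-!
The third derivative of `f` is bounded by some `M`, so the second-order Taylor remainder at `x`
is at most `M ‖y - x‖ ^ 3`, while the decay of `h` bounds the kernel by
`ε ^ (-d/2) * C * exp (-c ‖y - x‖² / ε)`. The substitution `y = x + √ε w` turns the integral of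
the product into `ε ^ (3/2)` times the fixed Gaussian moment `∫ ‖w‖ ^ 3 * exp (-c ‖w‖²)`.
-/

open MeasureTheory Filter Set
open scoped InnerProductSpace Topology

noncomputable section

/-- Euclidean space `ℝ^d`. -/
abbrev E (d : ℕ) := EuclideanSpace ℝ (Fin d)

/-- The rescaled symmetric kernel `h_ε(x,y) = ε^{-d/2} h(‖y-x‖²/ε)`. -/
def hker (d : ℕ) (h : ℝ → ℝ) (ε : ℝ) (x y : E d) : ℝ :=
  ε ^ (-(d : ℝ) / 2) * h (‖y - x‖ ^ 2 / ε)

/-- The Euclidean Laplacian `Δ f(x) = ∑ᵢ ∂²f/∂xᵢ²`. -/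
def lap {d : ℕ} (f : E d → ℝ) (x : E d) : ℝ :=
  ∑ i, fderiv ℝ (fun z => fderiv ℝ f z (EuclideanSpace.single i 1)) x (EuclideanSpace.single i 1)

/-- The divergence `∇·w (x) = ∑ᵢ ∂wᵢ/∂xᵢ`. -/
def divg {d : ℕ} (w : E d → E d) (x : E d) : ℝ :=
  ∑ i, fderiv ℝ w x (EuclideanSpace.single i 1) i

section Taylor

variable {V F : Type*} [NormedAddCommGroup V] [NormedSpace ℝ V]
  [NormedAddCommGroup F] [NormedSpace ℝ F]

theorem norm_image_sub_sub_fderiv_le {g : V → F} (hg : Differentiable ℝ g) {K : NNReal}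
    (hK : LipschitzWith K (fderiv ℝ g)) (x y : V) :
    ‖g y - g x - fderiv ℝ g x (y - x)‖ ≤ K * ‖y - x‖ ^ 2 := by
  have hy : y ∈ Metric.closedBall x ‖y - x‖ := by simp [dist_eq_norm]
  have hbound : ∀ z ∈ Metric.closedBall x ‖y - x‖, ‖fderiv ℝ g z - fderiv ℝ g x‖ ≤ K * ‖y - x‖ :=
    fun z hz => by
      rw [← dist_eq_norm]
      exact (hK.dist_le_mul z x).trans (by gcongr; exact hz)
  calc ‖g y - g x - fderiv ℝ g x (y - x)‖ ≤ K * ‖y - x‖ * ‖y - x‖ :=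
        (convex_closedBall x _).norm_image_sub_le_of_norm_fderiv_le' (fun z _ => hg z) hbound
          (Metric.mem_closedBall_self (norm_nonneg _)) hy
    _ = K * ‖y - x‖ ^ 2 := by ring

def secondOrderRemainder (f : V → F) (x y : V) : F :=
  f y - f x - fderiv ℝ f x (y - x) - (1 / 2 : ℝ) • fderiv ℝ (fderiv ℝ f) x (y - x) (y - x)

theorem hasFDerivAt_secondOrderRemainder {f : V → F} (hf : ContDiff ℝ 2 f) (x z : V) :
    HasFDerivAt (secondOrderRemainder f x)
      (fderiv ℝ f z - fderiv ℝ f x - fderiv ℝ (fderiv ℝ f) x (z - x)) z := by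
  set B := fderiv ℝ (fderiv ℝ f) x
  have hsub : HasFDerivAt (fun u => u - x) (ContinuousLinearMap.id ℝ V) z :=
    (hasFDerivAt_id z).sub_const x
  have hlin := (fderiv ℝ f x).hasFDerivAt.comp z hsub
  have hquad := (B.hasFDerivAt.comp z hsub).clm_apply hsub
  refine ((((hf.differentiable (by norm_num) z).hasFDerivAt.sub_const (f x)).sub hlin).sub
    (hquad.const_smul (1 / 2 : ℝ))).congr_fderiv ?_
  ext v
  -- the quadratic term contributes `(B (z - x) v + B v (z - x)) / 2`, and `B` is symmetric
  have hsymm : B v (z - x) = B (z - x) v :=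
    hf.contDiffAt.isSymmSndFDerivAt (by simp) v (z - x)
  simp only [sub_apply, add_apply, smul_apply, ContinuousLinearMap.comp_apply,
    ContinuousLinearMap.id_apply, ContinuousLinearMap.flip_apply, Function.comp_apply, hsymm]
  module

theorem lipschitzWith_fderiv_fderiv {f : V → F} (hf : ContDiff ℝ 3 f) {M : ℝ}
    (hM : ∀ z, ‖iteratedFDeriv ℝ 3 f z‖ ≤ M) :
    LipschitzWith M.toNNReal (fderiv ℝ (fderiv ℝ f)) := by
  have hf'' : Differentiable ℝ (fderiv ℝ (fderiv ℝ f)) :=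
    ((hf.fderiv_right (m := 2) (by norm_num)).fderiv_right (m := 1) (by norm_num)).differentiable
      (by norm_num)
  refine lipschitzWith_of_nnnorm_fderiv_le (𝕜 := ℝ) hf'' fun z => ?_
  rw [← NNReal.coe_le_coe, coe_nnnorm, ← norm_iteratedFDeriv_zero (𝕜 := ℝ),
    norm_iteratedFDeriv_fderiv, norm_iteratedFDeriv_fderiv, norm_iteratedFDeriv_fderiv]
  exact (hM z).trans (Real.le_coe_toNNReal M)

theorem norm_secondOrderRemainder_le {f : V → F} (hf : ContDiff ℝ 3 f) {M : ℝ}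
    (hM : ∀ z, ‖iteratedFDeriv ℝ 3 f z‖ ≤ M) (x y : V) :
    ‖secondOrderRemainder f x y‖ ≤ M * ‖y - x‖ ^ 3 := by
  have hM0 : 0 ≤ M := (norm_nonneg _).trans (hM x)
  have hy : y ∈ Metric.closedBall x ‖y - x‖ := by simp [dist_eq_norm]
  have hbound : ∀ z ∈ Metric.closedBall x ‖y - x‖,
      ‖fderiv ℝ f z - fderiv ℝ f x - fderiv ℝ (fderiv ℝ f) x (z - x)‖ ≤ M * ‖y - x‖ ^ 2 :=
    fun z hz => by
      rw [← Real.coe_toNNReal M hM0]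
      refine (norm_image_sub_sub_fderiv_le ((hf.fderiv_right (m := 2) (by norm_num)).differentiable
        (by norm_num)) (lipschitzWith_fderiv_fderiv hf hM) x z).trans ?_
      gcongr
      simpa [dist_eq_norm] using hz
  have hmvt := (convex_closedBall x _).norm_image_sub_le_of_norm_hasFDerivWithin_le
    (fun z _ => (hasFDerivAt_secondOrderRemainder (hf.of_le (by norm_num)) x z).hasFDerivWithinAt)
    hbound (Metric.mem_closedBall_self (norm_nonneg _)) hy
  simpa [secondOrderRemainder, pow_succ, mul_assoc] using hmvt

end Taylor

theorem pow_le_mul_exp_mul_sq (k : ℕ) {a : ℝ} (ha : 0 < a) (t : ℝ) :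
    t ^ k ≤ (1 + k.factorial / a ^ k) * Real.exp (a * t ^ 2) := by
  have hsq : t ^ k ≤ 1 + (t ^ 2) ^ k := by
    rw [← pow_mul, mul_comm, pow_mul]
    nlinarith [sq_nonneg (t ^ k - 1), sq_nonneg (t ^ k + 1)]
  have hexp : (t ^ 2) ^ k ≤ k.factorial / a ^ k * Real.exp (a * t ^ 2) := by
    have := Real.pow_div_factorial_le_exp (x := a * t ^ 2) (by positivity) k
    rw [mul_pow, div_le_iff₀ (by positivity)] at this
    rw [div_mul_eq_mul_div, le_div_iff₀ (by positivity)]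
    linarith
  nlinarith [Real.one_le_exp (x := a * t ^ 2) (by positivity)]

section Gaussian

variable {V : Type*} [NormedAddCommGroup V] [InnerProductSpace ℝ V] [FiniteDimensional ℝ V]
  [MeasurableSpace V] [BorelSpace V]

theorem integrable_exp_neg_mul_sq_norm {b : ℝ} (hb : 0 < b) :
    Integrable (fun v : V => Real.exp (-b * ‖v‖ ^ 2)) :=
  Integrable.of_integral_ne_zero <| by
    rw [GaussianFourier.integral_rexp_neg_mul_sq_norm hb]
    positivity

theorem integrable_norm_pow_mul_exp_neg_mul_sq (k : ℕ) {b : ℝ} (hb : 0 < b) :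
    Integrable (fun v : V => ‖v‖ ^ k * Real.exp (-b * ‖v‖ ^ 2)) := by
  refine ((integrable_exp_neg_mul_sq_norm (V := V) (half_pos hb)).const_mul
    (1 + k.factorial / (b / 2) ^ k)).mono' (by fun_prop) (.of_forall fun v => ?_)
  rw [Real.norm_of_nonneg (by positivity)]
  calc ‖v‖ ^ k * Real.exp (-b * ‖v‖ ^ 2)
      ≤ (1 + k.factorial / (b / 2) ^ k) * Real.exp (b / 2 * ‖v‖ ^ 2) * Real.exp (-b * ‖v‖ ^ 2) := by
        gcongr
        exact pow_le_mul_exp_mul_sq k (half_pos hb) ‖v‖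
    _ = (1 + k.factorial / (b / 2) ^ k) * Real.exp (-(b / 2) * ‖v‖ ^ 2) := by
        rw [mul_assoc, ← Real.exp_add]
        ring_nf

theorem integrable_norm_sub_pow_mul_exp_div (k : ℕ) {c ε : ℝ} (hc : 0 < c) (hε : 0 < ε) (x : V) :
    Integrable (fun y : V => ‖y - x‖ ^ k * Real.exp (-c * (‖y - x‖ ^ 2 / ε))) := by
  have hexp : ∀ t : ℝ, -c * (t / ε) = -(c / ε) * t := fun t => by ring
  simpa only [hexp] using
    (integrable_norm_pow_mul_exp_neg_mul_sq (V := V) k (div_pos hc hε)).comp_sub_right x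

end Gaussian

section Scaling

variable {V : Type*} [NormedAddCommGroup V] [NormedSpace ℝ V] [MeasurableSpace V] [BorelSpace V]
  [FiniteDimensional ℝ V] (μ : Measure V) [μ.IsAddHaarMeasure]

theorem integral_norm_pow_mul_comp_div (k : ℕ) (g : ℝ → ℝ) {ε : ℝ} (hε : 0 < ε) :
    ∫ z, ‖z‖ ^ k * g (‖z‖ ^ 2 / ε) ∂μ =
      ε ^ ((k + Module.finrank ℝ V : ℝ) / 2) * ∫ w, ‖w‖ ^ k * g (‖w‖ ^ 2) ∂μ := by
  have hR : 0 < √ε := Real.sqrt_pos.2 hε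
  have hpt (z : V) :
      ‖z‖ ^ k * g (‖z‖ ^ 2 / ε) = √ε ^ k * (‖(√ε)⁻¹ • z‖ ^ k * g (‖(√ε)⁻¹ • z‖ ^ 2)) := by
    rw [norm_smul, norm_inv, Real.norm_of_nonneg hR.le, mul_pow, mul_pow, inv_pow, inv_pow,
      Real.sq_sqrt hε.le]
    field_simp
  simp_rw [hpt, integral_const_mul]
  rw [Measure.integral_comp_inv_smul_of_nonneg μ (fun w => ‖w‖ ^ k * g (‖w‖ ^ 2)) hR.le,
    smul_eq_mul, ← mul_assoc, ← pow_add, Real.sqrt_eq_rpow, ← Real.rpow_natCast,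
    ← Real.rpow_mul hε.le]
  push_cast
  ring_nf

theorem integral_norm_sub_pow_mul_exp_div (k : ℕ) (c : ℝ) {ε : ℝ} (hε : 0 < ε) (x : V) :
    ∫ y, ‖y - x‖ ^ k * Real.exp (-c * (‖y - x‖ ^ 2 / ε)) ∂μ =
      ε ^ ((k + Module.finrank ℝ V : ℝ) / 2) * ∫ w, ‖w‖ ^ k * Real.exp (-c * ‖w‖ ^ 2) ∂μ := by
  rw [integral_sub_right_eq_self (fun z => ‖z‖ ^ k * Real.exp (-c * (‖z‖ ^ 2 / ε))) x]
  exact integral_norm_pow_mul_comp_div μ k (fun u => Real.exp (-c * u)) hε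

end Scaling

theorem abs_hker_mul_le {d : ℕ} {h : ℝ → ℝ} (h_nonneg : ∀ u, 0 ≤ h u) {C c : ℝ}
    (h_decay : ∀ u : ℝ, 0 ≤ u → h u ≤ C * Real.exp (-c * u)) {ε : ℝ} (hε : 0 < ε) {x y : E d}
    {r M : ℝ} (hr : |r| ≤ M * ‖y - x‖ ^ 3) :
    |hker d h ε x y * r| ≤
      ε ^ (-(d : ℝ) / 2) * C * M * (‖y - x‖ ^ 3 * Real.exp (-c * (‖y - x‖ ^ 2 / ε))) := by
  have hε' : 0 < ε ^ (-(d : ℝ) / 2) := Real.rpow_pos_of_pos hε _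
  have hker_le :
      |hker d h ε x y| ≤ ε ^ (-(d : ℝ) / 2) * (C * Real.exp (-c * (‖y - x‖ ^ 2 / ε))) := by
    rw [hker, abs_of_nonneg (mul_nonneg hε'.le (h_nonneg _))]
    exact mul_le_mul_of_nonneg_left (h_decay _ (by positivity)) hε'.le
  rw [abs_mul]
  calc _ ≤ ε ^ (-(d : ℝ) / 2) * (C * Real.exp (-c * (‖y - x‖ ^ 2 / ε))) * (M * ‖y - x‖ ^ 3) :=
        mul_le_mul hker_le hr (abs_nonneg _) ((abs_nonneg _).trans hker_le)
    _ = _ := by ring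

theorem stmt16_general
    (d : ℕ)
    (h : ℝ → ℝ) (h_nonneg : ∀ u, 0 ≤ h u)
    (C c : ℝ) (hc : 0 < c)
    (h_decay : ∀ u : ℝ, 0 ≤ u → h u ≤ C * Real.exp (-c * u))
    (f : E d → ℝ) (hf : ContDiff ℝ 3 f)
    (hf_bdd : ∀ n : ℕ, n ≤ 3 → ∃ M, ∀ x, ‖iteratedFDeriv ℝ n f x‖ ≤ M)
 :
    ∃ C' > 0, ∀ x : E d, ∀ ε : ℝ, ε ∈ Ioc (0 : ℝ) 1 →
      |∫ y, hker d h ε x y * (f y - f x - fderiv ℝ f x (y - x) -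
        (1 / 2) * fderiv ℝ (fderiv ℝ f) x (y - x) (y - x))| ≤ C' * ε ^ ((3 : ℝ) / 2) := by
  obtain ⟨M, hM⟩ := hf_bdd 3 le_rfl
  set I := ∫ w : E d, ‖w‖ ^ 3 * Real.exp (-c * ‖w‖ ^ 2)
  refine ⟨max (C * M * I) 1, by positivity, ?_⟩
  rintro x ε ⟨hε, -⟩
  change ‖∫ y, hker d h ε x y * secondOrderRemainder f x y‖ ≤ _
  have hscale : ε ^ (-(d : ℝ) / 2) * ε ^ ((3 + d : ℝ) / 2) = ε ^ ((3 : ℝ) / 2) := by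
    rw [← Real.rpow_add hε]
    ring_nf
  calc _ ≤ ∫ y, ε ^ (-(d : ℝ) / 2) * C * M * (‖y - x‖ ^ 3 * Real.exp (-c * (‖y - x‖ ^ 2 / ε))) :=
        norm_integral_le_of_norm_le
          ((integrable_norm_sub_pow_mul_exp_div 3 hc hε x).const_mul _) (.of_forall fun y =>
            abs_hker_mul_le h_nonneg h_decay hε (norm_secondOrderRemainder_le hf hM x y))
    _ = C * M * I * ε ^ ((3 : ℝ) / 2) := by
        rw [integral_const_mul, integral_norm_sub_pow_mul_exp_div volume 3 c hε x,
          finrank_euclideanSpace_fin, Nat.cast_ofNat, ← hscale]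
        ring
    _ ≤ max (C * M * I) 1 * ε ^ ((3 : ℝ) / 2) := by gcongr; exact le_max_left _ _

/-- The second-order Taylor remainder integrated against the rescaled
kernel is `O(ε^{3/2})`, uniformly in `x`. -/
theorem stmt16
    (d : ℕ) (hd : 0 < d)
    (h : ℝ → ℝ) (h_nonneg : ∀ u, 0 ≤ h u) (h_cont : Continuous h)
    (C c : ℝ) (hC : 0 < C) (hc : 0 < c)
    (h_decay : ∀ u : ℝ, 0 ≤ u → h u ≤ C * Real.exp (-c * u))
    (f : E d → ℝ) (hf : ContDiff ℝ 3 f)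
    (hf_bdd : ∀ n : ℕ, n ≤ 3 → ∃ M, ∀ x, ‖iteratedFDeriv ℝ n f x‖ ≤ M)
 :
    ∃ C' > 0, ∀ x : E d, ∀ ε : ℝ, ε ∈ Ioc (0 : ℝ) 1 →
      |∫ y, hker d h ε x y * (f y - f x - fderiv ℝ f x (y - x) -
        (1 / 2) * fderiv ℝ (fderiv ℝ f) x (y - x) (y - x))| ≤ C' * ε ^ ((3 : ℝ) / 2) :=
  stmt16_general d h h_nonneg C c hc h_decay f hf hf_bdd
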